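/- arXiv:1701.06238 — 10 statements merged into one kernel-verified Lean document; each statement's English description precedes it below -/
import Mathlib

section
/- Let ℝ^∞ denote the space of sequences ℕ → ℝ equipped with the product topology. Suppose f : ℝ^∞ → ℝ and D : ℝ^∞ → ℝ^∞ → ℝ are such that (i) for every x ∈ ℝ^∞ the map w ↦ D x w is ℝ-linear, (ii) D is jointly continuous as a map ℝ^∞ × ℝ^∞ → ℝ, and (iii) for all x, w ∈ ℝ^∞, f has line derivative D x w at x in direction w (i.e. the function t ↦ f(x + t•w) is differentiable at t = 0 with derivative D x w). Then f is locally of finite order: for every x ∈ ℝ^∞ there exist k ∈ ℕ and δ > 0 such that for all u, v ∈ ℝ^∞ satisfying |u i − x i| < δ and |v i − x i| < δ for all i < k, if u i = v i for all i < k then f(u) = f(v). -/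
/-- Every neighborhood of a point in `ℕ → ℝ` (product topology) contains a basic
box constraining only finitely many coordinates. -/
lemma pi_nhds_elim {x : ℕ → ℝ} {A : Set (ℕ → ℝ)} (hA : A ∈ nhds x) :
    ∃ k : ℕ, ∃ δ : ℝ, 0 < δ ∧ ∀ y : ℕ → ℝ, (∀ i < k, |y i - x i| < δ) → y ∈ A := by
  obtain ⟨U, hUA, hU, hxU⟩ := mem_nhds_iff.mp hA
  obtain ⟨I, u, hu, hsub⟩ := isOpen_pi_iff.mp hU x hxU
  choose ε hε hball using fun a (ha : a ∈ I) =>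
    Metric.isOpen_iff.mp (hu a ha).1 (x a) (hu a ha).2
  classical
  have hεpos : ∀ a : ℕ, 0 < (if h : a ∈ I then ε a h else 1) := by
    intro a
    by_cases h : a ∈ I
    · rw [dif_pos h]; exact hε a h
    · rw [dif_neg h]; norm_num
  obtain ⟨δ, hδmem, hδle⟩ :
      ∃ δ ∈ insert (1 : ℝ) (I.image fun a => if h : a ∈ I then ε a h else 1),
        ∀ b ∈ insert (1 : ℝ) (I.image fun a => if h : a ∈ I then ε a h else 1), δ ≤ b :=
    Finset.exists_min_image _ id ⟨1, Finset.mem_insert_self _ _⟩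
  have hδpos : 0 < δ := by
    rcases Finset.mem_insert.mp hδmem with h | h
    · rw [h]; norm_num
    · obtain ⟨a, _, hae⟩ := Finset.mem_image.mp h
      rw [← hae]; exact hεpos a
  refine ⟨I.sup id + 1, δ, hδpos, fun y hy => ?_⟩
  apply hUA
  apply hsub
  intro a ha
  have ha' : a ∈ I := ha
  have hak : a < I.sup id + 1 := Nat.lt_succ_of_le (Finset.le_sup (f := id) ha')
  have hle : δ ≤ ε a ha' := by
    have hmem : (if h : a ∈ I then ε a h else 1) ∈
        insert (1 : ℝ) (I.image fun a => if h : a ∈ I then ε a h else 1) :=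
      Finset.mem_insert_of_mem (Finset.mem_image_of_mem _ ha')
    have := hδle _ hmem
    rwa [dif_pos ha'] at this
  apply hball a ha'
  rw [Metric.mem_ball, Real.dist_eq]
  exact lt_of_lt_of_le (hy a hak) hle

/-- A Gâteaux-differentiable function on `ℝ^∞ = ℕ → ℝ` (with the product
topology) whose directional derivative is linear in the direction and jointly continuous
is locally of finite order. -/
theorem statement0
    (f : (ℕ → ℝ) → ℝ) (D : (ℕ → ℝ) → (ℕ → ℝ) → ℝ)
    (hlin : ∀ x : ℕ → ℝ, IsLinearMap ℝ (D x))
    (hcont : Continuous fun p : (ℕ → ℝ) × (ℕ → ℝ) => D p.1 p.2)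
    (hderiv : ∀ x w : ℕ → ℝ, HasDerivAt (fun t : ℝ => f (x + t • w)) (D x w) 0) :
    ∀ x : ℕ → ℝ, ∃ (k : ℕ) (δ : ℝ), 0 < δ ∧
      ∀ u v : ℕ → ℝ,
        (∀ i < k, |u i - x i| < δ) → (∀ i < k, |v i - x i| < δ) →
        (∀ i < k, u i = v i) → f u = f v := by
  intro x
  have hD0 : D x 0 = 0 := (hlin x).map_zero
  have hS : {p : (ℕ → ℝ) × (ℕ → ℝ) | |D p.1 p.2| < 1} ∈ nhds (x, (0 : ℕ → ℝ)) := by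
    have hca : ContinuousAt (fun p : (ℕ → ℝ) × (ℕ → ℝ) => D p.1 p.2) (x, 0) :=
      hcont.continuousAt
    have hnb : {y : ℝ | |y| < 1} ∈ nhds (D x 0) := by
      rw [hD0]
      have : Metric.ball (0 : ℝ) 1 ∈ nhds (0 : ℝ) := Metric.ball_mem_nhds _ one_pos
      convert this using 1
      ext y
      simp [Real.dist_eq]
    exact hca.preimage_mem_nhds hnb
  rw [nhds_prod_eq] at hS
  obtain ⟨A, hA, B, hB, hAB⟩ := Filter.mem_prod_iff.mp hS
  obtain ⟨k1, δ1, hδ1, h1⟩ := pi_nhds_elim hA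
  obtain ⟨k2, δ2, hδ2, h2⟩ := pi_nhds_elim (x := 0) hB
  refine ⟨max k1 k2, min δ1 δ2, lt_min hδ1 hδ2, ?_⟩
  set k := max k1 k2 with hk
  set δ := min δ1 δ2 with hδ
  -- key: D y w = 0 whenever y is in the box and w vanishes on first k coordinates
  have key : ∀ y w : ℕ → ℝ, (∀ i < k, |y i - x i| < δ) → (∀ i < k, w i = 0) →
      D y w = 0 := by
    intro y w hy hw
    have hyA : y ∈ A := h1 y fun i hi =>
      lt_of_lt_of_le (hy i (lt_of_lt_of_le hi (le_max_left _ _))) (min_le_left _ _)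
    have hbound : ∀ c : ℝ, |c * D y w| < 1 := by
      intro c
      have hwB : c • w ∈ B := by
        apply h2
        intro i hi
        have : w i = 0 := hw i (lt_of_lt_of_le hi (le_max_right _ _))
        simp [this, hδ2]
      have hmem : (y, c • w) ∈ A ×ˢ B := ⟨hyA, hwB⟩
      have := hAB hmem
      simp only [Set.mem_setOf_eq] at this
      rwa [(hlin y).map_smul, smul_eq_mul] at this
    by_contra hne
    have h2' := hbound (2 / D y w)
    rw [div_mul_cancel₀ 2 hne] at h2'
    norm_num at h2'
  -- main argument
  intro u v hu hv huv
  set w : ℕ → ℝ := v - u with hw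
  have hwz : ∀ i < k, w i = 0 := by
    intro i hi
    simp [hw, huv i hi]
  set g : ℝ → ℝ := fun t => f (u + t • w) with hg
  have hgd : ∀ t : ℝ, HasDerivAt g 0 t := by
    intro t
    have hy : ∀ i < k, |(u + t • w) i - x i| < δ := by
      intro i hi
      have : (u + t • w) i = u i := by simp [hwz i hi]
      rw [this]
      exact hu i hi
    have hD : D (u + t • w) w = 0 := key _ _ hy hwz
    have h := hderiv (u + t • w) w
    rw [hD] at h
    have hid : HasDerivAt (fun s : ℝ => s - t) 1 t := by
      simpa using (hasDerivAt_id t).sub_const t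
    have hcomp := HasDerivAt.comp t (by simpa using h) hid
    have heq : (fun s : ℝ => f ((u + t • w) + (s - t) • w)) = g := by
      funext s
      rw [hg]
      congr 1
      rw [sub_smul]
      abel
    rw [show (0 : ℝ) * 1 = 0 by ring] at hcomp
    have : ((fun s : ℝ => f ((u + t • w) + s • w)) ∘ fun s => s - t)
        = fun s : ℝ => f ((u + t • w) + (s - t) • w) := rfl
    rw [this, heq] at hcomp
    exact hcomp
  have hconst : g 0 = g 1 :=
    is_const_of_deriv_eq_zero (fun t => (hgd t).differentiableAt)
      (fun t => (hgd t).deriv) 0 1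
  have h0 : g 0 = f u := by simp [hg]
  have h1' : g 1 = f v := by
    rw [hg]
    simp only [one_smul, hw]
    congr 1
    abel
  rw [← h0, hconst, h1']
end

section
/- Let 𝒞 be a category with pullbacks, I : 𝒞 ⥤ 𝒞 a functor, and η : 𝟭_𝒞 ⟶ I a natural transformation. Call a morphism f : X → Y formally étale if the η-naturality square at f (with sides f, η_X, η_Y, I f) is a pullback square. For an object X define T^∞X as the pullback of η_X : X → I X along itself, regarded as an object of the slice category Over X via the first projection π : T^∞X → X. Then for every formally étale morphism f : X → Y, the pullback along f of (T^∞Y, π) ∈ Over Y is isomorphic in Over X to (T^∞X, π); that is, X ×_Y T^∞Y ≅ T^∞X over X. -/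
open CategoryTheory CategoryTheory.Limits

/-!
The map `T^∞X ⟶ T^∞Y` induced by `f` sits in a square over `f` whose right-hand pasting with
the defining square of `T^∞Y` is the defining square of `T^∞X` pasted with the `η`-square at
`f`. Both of the latter are pullbacks when `f` is formally étale, so the pasting lemma makes the
square over `f` a pullback, which identifies `T^∞X` with `X ×_Y T^∞Y`.
-/

namespace CategoryTheory.IsPullback

variable {C : Type*} [Category C]

theorem pullbackMap_self_fst {X Y A B : C} {a : X ⟶ A} {f : X ⟶ Y} {g : A ⟶ B} {b : Y ⟶ B}
    (h : IsPullback a f g b) [HasPullback a a] [HasPullback b b] :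
    IsPullback (pullback.map a a b b f f g h.w h.w) (pullback.fst a a) (pullback.fst b b) f := by
  have outer : IsPullback (pullback.snd a a ≫ f) (pullback.fst a a) b (a ≫ g) :=
    (IsPullback.of_hasPullback a a).flip.paste_horiz h.flip
  refine IsPullback.of_right ?_ (pullback.lift_fst _ _ _) (IsPullback.of_hasPullback b b).flip
  rwa [pullback.lift_snd, ← h.w]

end CategoryTheory.IsPullback

/-- Pullback along a formally étale morphism preserves formal disk
bundles: if the `η`-naturality square at `f : X ⟶ Y` is a pullback, then
`X ×_Y T^∞Y ≅ T^∞X` in `Over X`, where `T^∞X` is the pullback of `η_X` along itself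
with its first projection. -/
theorem statement2 {C : Type*} [Category C] [HasPullbacks C]
    (I : C ⥤ C) (η : 𝟭 C ⟶ I)
    {X Y : C} (f : X ⟶ Y)
    (hf : IsPullback (η.app X) f (I.map f) (η.app Y)) :
    Nonempty ((Over.pullback f).obj (Over.mk (pullback.fst (η.app Y) (η.app Y)))
      ≅ Over.mk (pullback.fst (η.app X) (η.app X))) :=
  ⟨Over.isoMk hf.pullbackMap_self_fst.isoPullback.symm (by simp)⟩
end

section
/- Let 𝒞 be a finitely complete category, I : 𝒞 ⥤ 𝒞 a functor preserving finite limits, and η : 𝟭_𝒞 ⟶ I a natural transformation. Let V be a group object in 𝒞 with multiplication m, unit e : ⊤ → V and inversion ι. Define T^∞V as the pullback of η_V : V → I V along itself, with first projection π and second projection ev, and define the formal disk D_e as the pullback of η_V ∘ e : ⊤ → I V along η_V : V → I V, with inclusion i : D_e → V. Then there is an isomorphism T^∞V ≅ V × D_e in Over V identifying π with the first projection pr₁ : V × D_e → V; moreover, under this isomorphism the morphism ev : T^∞V → V is identified with the composite V × D_e → V × V → V given by (id_V × i) followed by m ∘ (id_V × ι) (right translation by inverses of elements of D_e). -/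
/-!
The morphisms `X ⟶ V` form a group under `f * g = prod.lift f g ≫ m`, naturally in `X`. Since
`I` preserves binary products, `η_V` is a homomorphism `m ≫ η_V = (η_V × η_V) ≫ m'`, so
`f ≫ η_V` depends only on `f` modulo a congruence. A generalized element of `T^∞V` is a pair
`(a, b)` with `a ≡ b`, one of `V × D_e` is a pair `(a, d)` with `d ≡ 1`, and the shear maps
`(a, b) ↦ (a, b⁻¹ a)` and `(a, d) ↦ (a, a d⁻¹)` are mutually inverse.
-/

open CategoryTheory CategoryTheory.Limits

section

variable {C : Type*} [Category C]

lemma CategoryTheory.NatTrans.app_prod_eq_prodMap_comp_inv_prodComparison [HasBinaryProducts C]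
    {I : C ⥤ C} (η : 𝟭 C ⟶ I) (A B : C) [PreservesLimit (pair A B) I] :
    η.app (A ⨯ B) = prod.map (η.app A) (η.app B) ≫ inv (prodComparison I A B) := by
  rw [IsIso.eq_comp_inv, prodComparison_natural_of_natTrans]
  simp [prodComparison]

lemma CategoryTheory.NatTrans.comp_app_eq_prodMap_comp [HasBinaryProducts C] {I : C ⥤ C}
    (η : 𝟭 C ⟶ I) {A B Z : C} [PreservesLimit (pair A B) I] (m : A ⨯ B ⟶ Z) :
    m ≫ η.app Z = prod.map (η.app A) (η.app B) ≫ inv (prodComparison I A B) ≫ I.map m := by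
  rw [← Category.assoc, ← app_prod_eq_prodMap_comp_inv_prodComparison]
  exact η.naturality m

structure IsGroupObject [HasFiniteProducts C] {V : C} (m : V ⨯ V ⟶ V) (e : ⊤_ C ⟶ V)
    (ι : V ⟶ V) : Prop where
  assoc : prod.map m (𝟙 V) ≫ m = (prod.associator V V V).hom ≫ prod.map (𝟙 V) m ≫ m
  unit_left : prod.lift (terminal.from V ≫ e) (𝟙 V) ≫ m = 𝟙 V
  inv_left : prod.lift ι (𝟙 V) ≫ m = terminal.from V ≫ e

namespace IsGroupObject

variable [HasFiniteProducts C] {V : C} {m : V ⨯ V ⟶ V} {e : ⊤_ C ⟶ V} {ι : V ⟶ V}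
  (h : IsGroupObject m e ι)

noncomputable abbrev homGroup (X : C) : Group (X ⟶ V) :=
  letI : Mul (X ⟶ V) := ⟨fun f g => prod.lift f g ≫ m⟩
  letI : One (X ⟶ V) := ⟨terminal.from X ≫ e⟩
  letI : Inv (X ⟶ V) := ⟨fun f => f ≫ ι⟩
  Group.ofLeftAxioms
    (fun a b c => by
      have := prod.lift (prod.lift a b) c ≫= h.assoc
      simp only [prod.lift_map_assoc, prod.comp_lift_assoc, prod.associator_hom,
        Category.comp_id, prod.lift_fst_assoc, prod.lift_fst, prod.lift_snd] at this
      exact this)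
    (fun a => by
      have := a ≫= h.unit_left
      simp only [prod.comp_lift_assoc, Category.comp_id, terminal.comp_from_assoc] at this
      exact this)
    (fun a => by
      have := a ≫= h.inv_left
      simp only [prod.comp_lift_assoc, Category.comp_id, terminal.comp_from_assoc] at this
      exact this)

lemma comp_mul {X Y : C} (k : Y ⟶ X) (f g : X ⟶ V) :
    letI := h.homGroup; k ≫ (f * g) = (k ≫ f) * (k ≫ g) :=
  prod.comp_lift_assoc k f g m

lemma comp_inv {X Y : C} (k : Y ⟶ X) (f : X ⟶ V) :
    letI := h.homGroup; k ≫ f⁻¹ = (k ≫ f)⁻¹ :=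
  (Category.assoc k f ι).symm

variable {W : C} {q : V ⟶ W} {mW : W ⨯ W ⟶ W}

lemma mul_comp_congr (hq : m ≫ q = prod.map q q ≫ mW) {X : C} {f f' g g' : X ⟶ V}
    (hf : f ≫ q = f' ≫ q) (hg : g ≫ q = g' ≫ q) :
    letI := h.homGroup; (f * g) ≫ q = (f' * g') ≫ q := by
  change (prod.lift f g ≫ m) ≫ q = (prod.lift f' g' ≫ m) ≫ q
  rw [Category.assoc, Category.assoc, hq, prod.lift_map_assoc, prod.lift_map_assoc, hf, hg]

lemma inv_mul_comp_eq_one_comp (hq : m ≫ q = prod.map q q ≫ mW) {X : C} {a b : X ⟶ V}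
    (hab : a ≫ q = b ≫ q) :
    letI := h.homGroup; (b⁻¹ * a) ≫ q = (1 : X ⟶ V) ≫ q := by
  let := h.homGroup
  rw [← inv_mul_cancel b]
  exact h.mul_comp_congr hq rfl hab

lemma inv_comp_eq_one_comp (hq : m ≫ q = prod.map q q ≫ mW) {X : C} {d : X ⟶ V}
    (hd : letI := h.homGroup; d ≫ q = (1 : X ⟶ V) ≫ q) :
    letI := h.homGroup; d⁻¹ ≫ q = (1 : X ⟶ V) ≫ q := by
  let := h.homGroup
  simpa using h.inv_mul_comp_eq_one_comp hq hd.symm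

lemma mul_inv_comp_eq_comp (hq : m ≫ q = prod.map q q ≫ mW) {X : C} {a d : X ⟶ V}
    (hd : letI := h.homGroup; d ≫ q = (1 : X ⟶ V) ≫ q) :
    letI := h.homGroup; (a * d⁻¹) ≫ q = a ≫ q := by
  let := h.homGroup
  simpa using h.mul_comp_congr hq rfl (h.inv_comp_eq_one_comp hq hd)

variable [HasPullbacks C]

noncomputable def shearIso (hq : m ≫ q = prod.map q q ≫ mW) :
    pullback q q ≅ V ⨯ pullback q (e ≫ q) :=
  letI : ∀ X, Group (X ⟶ V) := h.homGroup
  { hom := prod.lift (pullback.fst q q)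
      (pullback.lift ((pullback.snd q q)⁻¹ * pullback.fst q q) (terminal.from _)
        ((h.inv_mul_comp_eq_one_comp hq pullback.condition).trans (Category.assoc _ _ _)))
    inv := pullback.lift prod.fst (prod.fst * (prod.snd ≫ pullback.fst q (e ≫ q))⁻¹) (by
        refine (h.mul_inv_comp_eq_comp hq ?_).symm
        change _ = (terminal.from _ ≫ e) ≫ q
        rw [Category.assoc, pullback.condition, ← Category.assoc prod.snd,
          terminal.hom_ext (prod.snd ≫ _) (terminal.from _), Category.assoc])
    hom_inv_id := by
      apply pullback.hom_ext
      · rw [Category.assoc, pullback.lift_fst, prod.lift_fst, Category.id_comp]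
      · rw [Category.assoc, pullback.lift_snd, h.comp_mul, h.comp_inv, prod.lift_fst,
          prod.lift_snd_assoc, pullback.lift_fst, Category.id_comp]
        group
    inv_hom_id := by
      apply prod.hom_ext
      · rw [Category.assoc, prod.lift_fst, pullback.lift_fst, Category.id_comp]
      · apply pullback.hom_ext
        · simp only [Category.assoc, prod.lift_snd_assoc, pullback.lift_fst, h.comp_mul,
            h.comp_inv, pullback.lift_snd, Category.id_comp]
          group
        · exact terminal.hom_ext _ _ }

lemma shearIso_hom_fst (hq : m ≫ q = prod.map q q ≫ mW) :
    (h.shearIso hq).hom ≫ prod.fst = pullback.fst q q :=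
  prod.lift_fst _ _

lemma shearIso_inv_snd (hq : m ≫ q = prod.map q q ≫ mW) :
    (h.shearIso hq).inv ≫ pullback.snd q q =
      prod.map (𝟙 V) (pullback.fst q (e ≫ q)) ≫ prod.map (𝟙 V) ι ≫ m := by
  rw [shearIso, pullback.lift_snd, prod.map_map_assoc, Category.id_comp]
  change prod.lift _ _ ≫ m = _
  congr 1
  apply prod.hom_ext
  · simp only [prod.lift_fst, prod.map_fst, Category.comp_id]
  · simp only [prod.lift_snd, prod.map_snd]
    exact Category.assoc (prod.snd : V ⨯ _ ⟶ _) (pullback.fst q (e ≫ q)) ι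

end IsGroupObject

end

theorem statement3_general {C : Type*} [Category C] [HasFiniteLimits C]
    (I : C ⥤ C) [PreservesFiniteLimits I] (η : 𝟭 C ⟶ I)
    (V : C) (m : V ⨯ V ⟶ V) (e : ⊤_ C ⟶ V) (ι : V ⟶ V)
    (assoc : prod.map m (𝟙 V) ≫ m = (prod.associator V V V).hom ≫ prod.map (𝟙 V) m ≫ m)
    (unit_left : prod.lift (terminal.from V ≫ e) (𝟙 V) ≫ m = 𝟙 V)
    (inv_left : prod.lift ι (𝟙 V) ≫ m = terminal.from V ≫ e) :
    ∃ φ : pullback (η.app V) (η.app V) ≅ V ⨯ pullback (η.app V) (e ≫ η.app V),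
      φ.hom ≫ prod.fst = pullback.fst (η.app V) (η.app V) ∧
      φ.hom ≫ (prod.map (𝟙 V) (pullback.fst (η.app V) (e ≫ η.app V))
          ≫ prod.map (𝟙 V) ι ≫ m)
        = pullback.snd (η.app V) (η.app V) := by
  have hV : IsGroupObject m e ι := ⟨assoc, unit_left, inv_left⟩
  have hη := η.comp_app_eq_prodMap_comp m
  exact ⟨hV.shearIso hη, hV.shearIso_hom_fst hη, by
    rw [← hV.shearIso_inv_snd hη, Iso.hom_inv_id_assoc]⟩

/-- For a group object `V` in a finitely complete category equipped with a
finite-limit-preserving endofunctor `I` and a natural transformation `η : 𝟭 ⟶ I`, the formal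
disk bundle `T^∞V` (the pullback of `η_V` along itself) trivializes: `T^∞V ≅ V ⨯ 𝔻ₑ` over `V`
(identifying `π` with `pr₁`), where `𝔻ₑ` is the formal disk at the unit (the pullback of
`η_V ∘ e` along `η_V`); and under this isomorphism `ev` is identified with right translation
by inverses of elements of `𝔻ₑ`, i.e. with `(id_V × i) ≫ (id_V × ι) ≫ m`. -/
theorem statement3 {C : Type*} [Category C] [HasFiniteLimits C]
    (I : C ⥤ C) [PreservesFiniteLimits I] (η : 𝟭 C ⟶ I)
    (V : C) (m : V ⨯ V ⟶ V) (e : ⊤_ C ⟶ V) (ι : V ⟶ V)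
    (assoc : prod.map m (𝟙 V) ≫ m = (prod.associator V V V).hom ≫ prod.map (𝟙 V) m ≫ m)
    (unit_left : prod.lift (terminal.from V ≫ e) (𝟙 V) ≫ m = 𝟙 V)
    (unit_right : prod.lift (𝟙 V) (terminal.from V ≫ e) ≫ m = 𝟙 V)
    (inv_left : prod.lift ι (𝟙 V) ≫ m = terminal.from V ≫ e)
    (inv_right : prod.lift (𝟙 V) ι ≫ m = terminal.from V ≫ e) :
    ∃ φ : pullback (η.app V) (η.app V) ≅ V ⨯ pullback (η.app V) (e ≫ η.app V),
      φ.hom ≫ prod.fst = pullback.fst (η.app V) (η.app V) ∧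
      φ.hom ≫ (prod.map (𝟙 V) (pullback.fst (η.app V) (e ≫ η.app V))
          ≫ prod.map (𝟙 V) ι ≫ m)
        = pullback.snd (η.app V) (η.app V) :=
  statement3_general I η V m e ι assoc unit_left inv_left
end

section
/- Let 𝒞 be a finitely complete category, I : 𝒞 ⥤ 𝒞 a functor preserving finite limits, η : 𝟭_𝒞 ⟶ I a natural transformation, and V a group object in 𝒞, with D_e the pullback of η_V ∘ e : ⊤ → I V along η_V : V → I V (the formal disk at the unit of V). Suppose X is a 'V-manifold': there are morphisms a : U → V and b : U → X which are both formally étale (their η-naturality squares are pullbacks), with b an epimorphism. Then, writing T^∞X for the pullback of η_X along itself with first projection π : T^∞X → X, there is a pullback square exhibiting U × D_e as the pullback of π : T^∞X → X along b : U → X, with left leg the projection pr₁ : U × D_e → U; in particular T^∞X is a locally trivial D_e-fiber bundle over X. -/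
/-!
Formal étaleness of `c : U ⟶ Y` says exactly that `T^∞U` is the pullback of `T^∞Y` along `c`.
Applied to `b`, this identifies the pullback of `T^∞X` along `b` with `T^∞U`; applied to `a`, it
identifies `T^∞U` with the pullback of `T^∞V` along `a`. The group structure trivialises
`T^∞V ≅ V ⨯ 𝔻ₑ` over `V` by the shear map `(v, d) ↦ (v, v d)` with inverse `(x, y) ↦ (x, x⁻¹ y)`;
it is well defined because `I` preserves products, so `η (v d) = η (v e) = η v` whenever
`η d = η e`.
-/

open CategoryTheory CategoryTheory.Limits

attribute [local simp] prod.lift_fst prod.lift_snd prod.lift_fst_assoc prod.lift_snd_assoc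
  pullback.lift_fst pullback.lift_snd pullback.lift_fst_assoc pullback.lift_snd_assoc

section

variable {C : Type*} [Category C]

section FormalDisk

variable {I : C ⥤ C} (η : 𝟭 C ⟶ I)

abbrev FormallyEtale {U Y : C} (c : U ⟶ Y) : Prop :=
  IsPullback (η.app U) c (I.map c) (η.app Y)

variable [HasPullbacks C]

noncomputable abbrev formalDiskBundle (X : C) : C := pullback (η.app X) (η.app X)

noncomputable def formalDiskBundle.map {U Y : C} (c : U ⟶ Y) :
    formalDiskBundle η U ⟶ formalDiskBundle η Y :=
  pullback.map _ _ _ _ c c (I.map c) (η.naturality c).symm (η.naturality c).symm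

@[simp]
lemma formalDiskBundle.map_fst {U Y : C} (c : U ⟶ Y) :
    formalDiskBundle.map η c ≫ pullback.fst _ _ = pullback.fst _ _ ≫ c :=
  pullback.lift_fst _ _ _

@[simp]
lemma formalDiskBundle.map_snd {U Y : C} (c : U ⟶ Y) :
    formalDiskBundle.map η c ≫ pullback.snd _ _ = pullback.snd _ _ ≫ c :=
  pullback.lift_snd _ _ _

variable {η} in
lemma FormallyEtale.isPullback_formalDiskBundle_map {U Y : C} {c : U ⟶ Y}
    (hc : FormallyEtale η c) :
    IsPullback (formalDiskBundle.map η c) (pullback.fst _ _) (pullback.fst _ _) c := by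
  have outer : IsPullback (pullback.snd (η.app U) (η.app U) ≫ c) (pullback.fst _ _)
      (η.app Y) (c ≫ η.app Y) := by
    simpa [← η.naturality c] using
      (IsPullback.of_hasPullback (η.app U) (η.app U)).flip.paste_horiz hc.flip
  exact IsPullback.of_right (by simpa using outer) (by simp) (IsPullback.of_hasPullback _ _).flip

variable [HasTerminal C]

noncomputable abbrev formalDisk {V : C} (x : ⊤_ C ⟶ V) : C := pullback (η.app V) (x ≫ η.app V)

lemma formalDisk.fst_comp_app {V : C} (x : ⊤_ C ⟶ V) :
    pullback.fst (η.app V) (x ≫ η.app V) ≫ η.app V = terminal.from _ ≫ x ≫ η.app V := by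
  rw [pullback.condition, terminal.hom_ext (pullback.snd _ _) (terminal.from _)]

end FormalDisk

section Products

variable [HasBinaryProducts C]

lemma isPullback_prodMap_id_fst [HasTerminal C] {U V : C} (a : U ⟶ V) (D : C) :
    IsPullback (prod.map a (𝟙 D)) prod.fst prod.fst a :=
  IsPullback.of_right (by simpa using (IsPullback.of_hasBinaryProduct' U D).flip) (by simp)
    (IsPullback.of_hasBinaryProduct' V D).flip

variable {I : C ⥤ C} [PreservesLimitsOfShape (Discrete WalkingPair) I] (η : 𝟭 C ⟶ I)

lemma prod_lift_comp_app_eq {W A B : C} {f f' : W ⟶ A} {g g' : W ⟶ B}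
    (hf : f ≫ η.app A = f' ≫ η.app A) (hg : g ≫ η.app B = g' ≫ η.app B) :
    prod.lift f g ≫ η.app (A ⨯ B) = prod.lift f' g' ≫ η.app (A ⨯ B) := by
  rw [← cancel_mono (prodComparison I A B)]
  apply prod.hom_ext
  · simpa [← η.naturality] using hf
  · simpa [← η.naturality] using hg

lemma prod_lift_comp_comp_app_eq {W A B Z : C} (μ : A ⨯ B ⟶ Z) (f : W ⟶ A) {g g' : W ⟶ B}
    (hg : g ≫ η.app B = g' ≫ η.app B) :
    (prod.lift f g ≫ μ) ≫ η.app Z = (prod.lift f g' ≫ μ) ≫ η.app Z := by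
  have naturality : μ ≫ η.app Z = η.app (A ⨯ B) ≫ I.map μ := η.naturality μ
  rw [Category.assoc, Category.assoc, naturality, ← Category.assoc, ← Category.assoc,
    prod_lift_comp_app_eq η rfl hg]

end Products

section GroupObject

variable [HasTerminal C] [HasBinaryProducts C]

structure IsGroupObj {V : C} (m : V ⨯ V ⟶ V) (e : ⊤_ C ⟶ V) (ι : V ⟶ V) : Prop where
  assoc : prod.map m (𝟙 V) ≫ m = (prod.associator V V V).hom ≫ prod.map (𝟙 V) m ≫ m
  one_mul : prod.lift (terminal.from V ≫ e) (𝟙 V) ≫ m = 𝟙 V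
  mul_one : prod.lift (𝟙 V) (terminal.from V ≫ e) ≫ m = 𝟙 V
  inv_mul : prod.lift ι (𝟙 V) ≫ m = terminal.from V ≫ e
  mul_inv : prod.lift (𝟙 V) ι ≫ m = terminal.from V ≫ e

namespace IsGroupObj

variable {V W : C} {m : V ⨯ V ⟶ V} {e : ⊤_ C ⟶ V} {ι : V ⟶ V} (hV : IsGroupObj m e ι)
include hV

lemma lift_one_mul (f : W ⟶ V) : prod.lift (terminal.from W ≫ e) f ≫ m = f := by
  simpa [prod.comp_lift_assoc] using f ≫= hV.one_mul

lemma lift_mul_one (f : W ⟶ V) : prod.lift f (terminal.from W ≫ e) ≫ m = f := by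
  simpa [prod.comp_lift_assoc] using f ≫= hV.mul_one

lemma lift_inv_mul (f : W ⟶ V) : prod.lift (f ≫ ι) f ≫ m = terminal.from W ≫ e := by
  simpa [prod.comp_lift_assoc] using f ≫= hV.inv_mul

lemma lift_mul_inv (f : W ⟶ V) : prod.lift f (f ≫ ι) ≫ m = terminal.from W ≫ e := by
  simpa [prod.comp_lift_assoc] using f ≫= hV.mul_inv

lemma lift_mul_assoc (f g h : W ⟶ V) :
    prod.lift (prod.lift f g ≫ m) h ≫ m = prod.lift f (prod.lift g h ≫ m) ≫ m := by
  simpa [prod.comp_lift_assoc] using prod.lift (prod.lift f g) h ≫= hV.assoc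

variable [HasPullbacks C] {I : C ⥤ C} [PreservesLimitsOfShape (Discrete WalkingPair) I]
  (η : 𝟭 C ⟶ I)

noncomputable def prodFormalDiskIso : V ⨯ formalDisk η e ≅ formalDiskBundle η V where
  hom := pullback.lift prod.fst (prod.lift prod.fst (prod.snd ≫ pullback.fst _ _) ≫ m) <| by
    calc prod.fst ≫ η.app V
        = (prod.lift prod.fst (terminal.from _ ≫ e) ≫ m) ≫ η.app V := by
          rw [hV.lift_mul_one]; rfl
      _ = _ := prod_lift_comp_comp_app_eq η m _ <| by
        simp only [Category.assoc, formalDisk.fst_comp_app]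
        rw [← Category.assoc _ (terminal.from _), terminal.comp_from]
  inv := prod.lift (pullback.fst _ _)
    (pullback.lift (prod.lift (pullback.fst _ _ ≫ ι) (pullback.snd _ _) ≫ m) (terminal.from _) <| by
      calc (prod.lift (pullback.fst _ _ ≫ ι) (pullback.snd _ _) ≫ m) ≫ η.app V
          = (prod.lift (pullback.fst _ _ ≫ ι) (pullback.fst _ _) ≫ m) ≫ η.app V :=
            prod_lift_comp_comp_app_eq η m _ pullback.condition.symm
        _ = _ := by rw [hV.lift_inv_mul, Category.assoc])
  hom_inv_id := by
    apply prod.hom_ext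
    · simp
    · apply pullback.hom_ext
      · simp only [prod.comp_lift_assoc, Category.assoc, prod.lift_snd, pullback.lift_fst,
          pullback.lift_fst_assoc, pullback.lift_snd, Category.id_comp]
        rw [← hV.lift_mul_assoc, hV.lift_inv_mul, hV.lift_one_mul]
      · exact terminal.hom_ext _ _
  inv_hom_id := by
    apply pullback.hom_ext
    · simp
    · simp only [Category.assoc, pullback.lift_snd, prod.comp_lift_assoc, prod.lift_fst,
        prod.lift_snd_assoc, pullback.lift_fst, Category.id_comp]
      rw [← hV.lift_mul_assoc, hV.lift_mul_inv, hV.lift_one_mul]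

@[simp]
lemma prodFormalDiskIso_hom_fst :
    (hV.prodFormalDiskIso η).hom ≫ pullback.fst _ _ = prod.fst :=
  pullback.lift_fst _ _ _

lemma isPullback_prodMap_prodFormalDiskIso {U : C} (a : U ⟶ V) :
    IsPullback (prod.map a (𝟙 _) ≫ (hV.prodFormalDiskIso η).hom) prod.fst (pullback.fst _ _) a := by
  simpa using (isPullback_prodMap_id_fst a (formalDisk η e)).paste_horiz
    (IsPullback.of_horiz_isIso (g := 𝟙 V) ⟨by simp⟩)

end IsGroupObj

end GroupObject

end

theorem statement4_general {C : Type*} [Category C] [HasFiniteLimits C]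
    (I : C ⥤ C) [PreservesFiniteLimits I] (η : 𝟭 C ⟶ I)
    (V : C) (m : V ⨯ V ⟶ V) (e : ⊤_ C ⟶ V) (ι : V ⟶ V)
    (assoc : prod.map m (𝟙 V) ≫ m = (prod.associator V V V).hom ≫ prod.map (𝟙 V) m ≫ m)
    (unit_left : prod.lift (terminal.from V ≫ e) (𝟙 V) ≫ m = 𝟙 V)
    (unit_right : prod.lift (𝟙 V) (terminal.from V ≫ e) ≫ m = 𝟙 V)
    (inv_left : prod.lift ι (𝟙 V) ≫ m = terminal.from V ≫ e)
    (inv_right : prod.lift (𝟙 V) ι ≫ m = terminal.from V ≫ e)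
    {X U : C} (a : U ⟶ V) (b : U ⟶ X)
    (ha : IsPullback (η.app U) a (I.map a) (η.app V))
    (hb : IsPullback (η.app U) b (I.map b) (η.app X)) :
    ∃ t : U ⨯ pullback (η.app V) (e ≫ η.app V) ⟶ pullback (η.app X) (η.app X),
      IsPullback t prod.fst (pullback.fst (η.app X) (η.app X)) b := by
  have hV : IsGroupObj m e ι := ⟨assoc, unit_left, unit_right, inv_left, inv_right⟩
  let χ : U ⨯ formalDisk η e ≅ formalDiskBundle η U :=
    (hV.isPullback_prodMap_prodFormalDiskIso η a).isoIsPullback _ _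
      (FormallyEtale.isPullback_formalDiskBundle_map ha)
  have hχ : IsPullback χ.hom prod.fst (pullback.fst _ _) (𝟙 U) :=
    IsPullback.of_horiz_isIso ⟨by simp [χ]⟩
  refine ⟨χ.hom ≫ formalDiskBundle.map η b, ?_⟩
  simpa using hχ.paste_horiz (FormallyEtale.isPullback_formalDiskBundle_map hb)

/-- If `X` is a `V`-manifold, i.e. there are formally étale morphisms
`a : U ⟶ V` and `b : U ⟶ X` with `b` epi, where `V` is a group object, then the formal disk
bundle `T^∞X` (pullback of `η_X` along itself, with first projection `π`) becomes trivial
when pulled back along `b`: there is a pullback square with corners `U ⨯ 𝔻ₑ`, `U`, `T^∞X`,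
`X`, whose left leg is `pr₁` and bottom leg is `b`. -/
theorem statement4 {C : Type*} [Category C] [HasFiniteLimits C]
    (I : C ⥤ C) [PreservesFiniteLimits I] (η : 𝟭 C ⟶ I)
    (V : C) (m : V ⨯ V ⟶ V) (e : ⊤_ C ⟶ V) (ι : V ⟶ V)
    (assoc : prod.map m (𝟙 V) ≫ m = (prod.associator V V V).hom ≫ prod.map (𝟙 V) m ≫ m)
    (unit_left : prod.lift (terminal.from V ≫ e) (𝟙 V) ≫ m = 𝟙 V)
    (unit_right : prod.lift (𝟙 V) (terminal.from V ≫ e) ≫ m = 𝟙 V)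
    (inv_left : prod.lift ι (𝟙 V) ≫ m = terminal.from V ≫ e)
    (inv_right : prod.lift (𝟙 V) ι ≫ m = terminal.from V ≫ e)
    {X U : C} (a : U ⟶ V) (b : U ⟶ X)
    (ha : IsPullback (η.app U) a (I.map a) (η.app V))
    (hb : IsPullback (η.app U) b (I.map b) (η.app X))
    [Epi b] :
    ∃ t : U ⨯ pullback (η.app V) (e ≫ η.app V) ⟶ pullback (η.app X) (η.app X),
      IsPullback t prod.fst (pullback.fst (η.app X) (η.app X)) b :=
  statement4_general I η V m e ι assoc unit_left unit_right inv_left inv_right a b ha hb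
end

section
/- Let L ⊣ C ⊣ R be an adjoint triple with induced monad T := L ⋙ C (unit η) and comonad J := R ⋙ C (counit ε, comultiplication Δ) on A, and composite adjunction T ⊣ J. Let e : ℰ → J Y be a monomorphism and let s : T E → ℰ be an E-parametrized family of formal solutions (i.e. e ∘ s is formally holonomic). Let ρ : E → J ℰ be the (T ⊣ J)-adjunct of s and set e^E_Y := e ∘ s ∘ η_E : E → J Y. Then: (i) J(e) ∘ ρ = Δ_Y ∘ e^E_Y, and (ii) e ∘ (ε_ℰ ∘ ρ) = e^E_Y. -/
open CategoryTheory

/-- `σ : T E ⟶ J Y` is formally holonomic if its `(T ⊣ J)`-adjunct `σ̃ : E ⟶ J (J Y)`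
equals `Δ_Y ∘ σ ∘ η_E`, where `T := L ⋙ C` is the monad (unit `η` from `L ⊣ C`) and
`J := R ⋙ C` is the comonad (comultiplication `Δ = C η' R` from `C ⊣ R`) of an adjoint
triple `L ⊣ C ⊣ R`. -/
def FormallyHolonomic {A B : Type*} [Category A] [Category B]
    {L R : A ⥤ B} {C : B ⥤ A} (adjLC : L ⊣ C) (adjCR : C ⊣ R)
    {E Y : A} (σ : (L ⋙ C).obj E ⟶ (R ⋙ C).obj Y) : Prop :=
  (adjLC.comp adjCR).homEquiv E ((R ⋙ C).obj Y) σ =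
    adjLC.unit.app E ≫ σ ≫ C.map (adjCR.unit.app (R.obj Y))

/-- For a monomorphism `e : ℰ ⟶ J Y` and an `E`-parametrized family of
formal solutions `s : T E ⟶ ℰ` (i.e. `e ∘ s` formally holonomic), with `ρ : E ⟶ J ℰ` the
`(T ⊣ J)`-adjunct of `s` and `e^E_Y := e ∘ s ∘ η_E`, one has
(i) `J(e) ∘ ρ = Δ_Y ∘ e^E_Y`, and (ii) `e ∘ (ε_ℰ ∘ ρ) = e^E_Y`. -/
theorem statement8 {A B : Type*} [Category A] [Category B]
    {L R : A ⥤ B} {C : B ⥤ A} (adjLC : L ⊣ C) (adjCR : C ⊣ R)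
    {E Y ℰ : A} (e : ℰ ⟶ (R ⋙ C).obj Y) [Mono e]
    (s : (L ⋙ C).obj E ⟶ ℰ)
    (hs : FormallyHolonomic adjLC adjCR (s ≫ e)) :
    ((adjLC.comp adjCR).homEquiv E ℰ s ≫ (R ⋙ C).map e
        = (adjLC.unit.app E ≫ s ≫ e) ≫ C.map (adjCR.unit.app (R.obj Y))) ∧
    ((adjLC.comp adjCR).homEquiv E ℰ s ≫ adjCR.counit.app ℰ ≫ e
        = adjLC.unit.app E ≫ s ≫ e) := by
  unfold FormallyHolonomic at hs
  have h1 : (adjLC.comp adjCR).homEquiv E ℰ s ≫ (R ⋙ C).map e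
      = (adjLC.unit.app E ≫ s ≫ e) ≫ C.map (adjCR.unit.app (R.obj Y)) := by
    rw [← Adjunction.homEquiv_naturality_right, hs]
    simp
  refine ⟨h1, ?_⟩
  have hnat : (R ⋙ C).map e ≫ adjCR.counit.app ((R ⋙ C).obj Y)
      = adjCR.counit.app ℰ ≫ e := adjCR.counit.naturality e
  calc (adjLC.comp adjCR).homEquiv E ℰ s ≫ adjCR.counit.app ℰ ≫ e
      = ((adjLC.comp adjCR).homEquiv E ℰ s ≫ (R ⋙ C).map e) ≫
          adjCR.counit.app ((R ⋙ C).obj Y) := by rw [Category.assoc, hnat]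
    _ = (adjLC.unit.app E ≫ s ≫ e) ≫ C.map (adjCR.unit.app (R.obj Y)) ≫
          adjCR.counit.app ((R ⋙ C).obj Y) := by rw [h1, Category.assoc]
    _ = adjLC.unit.app E ≫ s ≫ e := by
          have h := adjCR.left_triangle_components (R.obj Y)
          simp only [Functor.comp_obj] at h ⊢
          rw [h]; simp
end

section
/- Let (J, ε, Δ) be a comonad on a category 𝒞, and suppose the functor J preserves pullbacks. Let e : ℰ → J Y be a monomorphism and ρ : ℰ → J ℰ a morphism such that J(e) ∘ ρ = Δ_Y ∘ e and this commuting square (top e, left ρ, right Δ_Y, bottom J(e)) is a pullback square. Then ρ is a J-coalgebra structure on ℰ, i.e. ε_ℰ ∘ ρ = id_ℰ and J(ρ) ∘ ρ = Δ_ℰ ∘ ρ; moreover e is then a morphism of coalgebras from (ℰ, ρ) to the cofree coalgebra (J Y, Δ_Y). -/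
open CategoryTheory CategoryTheory.Limits

/-- Let `(J, ε, Δ)` be a comonad whose functor preserves pullbacks. If
`e : ℰ ⟶ J Y` is a monomorphism and `ρ : ℰ ⟶ J ℰ` makes the square with sides `e`, `ρ`,
`Δ_Y`, `J(e)` commute and Cartesian (a formally integrable generalized PDE), then `ρ` is a
`J`-coalgebra structure on `ℰ` (counitality and coassociativity hold), and `e` is a
morphism of coalgebras from `(ℰ, ρ)` to the cofree coalgebra `(J Y, Δ_Y)`. -/
theorem statement10 {C : Type*} [Category C] (G : Comonad C)
    [PreservesLimitsOfShape WalkingCospan G.toFunctor]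
    {ℰ Y : C} (e : ℰ ⟶ G.obj Y) [Mono e] (ρ : ℰ ⟶ G.obj ℰ)
    (hpb : IsPullback e ρ (G.δ.app Y) (G.map e)) :
    ρ ≫ G.ε.app ℰ = 𝟙 ℰ ∧
    ρ ≫ G.map ρ = ρ ≫ G.δ.app ℰ ∧
    ρ ≫ G.map e = e ≫ G.δ.app Y := by
  have hw : e ≫ G.δ.app Y = ρ ≫ G.map e := hpb.w
  haveI : Mono (G.map e) := G.toFunctor.map_mono e
  haveI : Mono (G.map (G.map e)) := G.toFunctor.map_mono (G.map e)
  refine ⟨?_, ?_, hw.symm⟩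
  · rw [← cancel_mono e]
    have hnat : G.ε.app ℰ ≫ e = G.map e ≫ G.ε.app (G.obj Y) := (G.ε.naturality e).symm
    rw [Category.id_comp, Category.assoc, hnat, ← Category.assoc, ← hw,
      Category.assoc, G.left_counit, Category.comp_id]
  · rw [← cancel_mono (G.map (G.map e))]
    have h1 : ρ ≫ G.map ρ ≫ G.map (G.map e) = e ≫ G.δ.app Y ≫ G.map (G.δ.app Y) := by
      rw [← G.toFunctor.map_comp, ← hw, G.toFunctor.map_comp, ← Category.assoc, ← hw, Category.assoc]
    have h2 : ρ ≫ G.δ.app ℰ ≫ G.map (G.map e) = e ≫ G.δ.app Y ≫ G.map (G.δ.app Y) := by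
      have hnat : G.δ.app ℰ ≫ G.map (G.map e) = G.map e ≫ G.δ.app (G.obj Y) :=
        (G.δ.naturality e).symm
      rw [hnat, ← Category.assoc, ← hw, Category.assoc, G.coassoc]
    rw [Category.assoc, Category.assoc, h1, h2]
end

section
/- Let (J, ε, Δ) be a comonad on a category 𝒞 having equalizers and pullbacks, such that J preserves equalizers and pullbacks. Let f₀, g₀ : J Y → Z be morphisms, let e₀ : K₀ → J Y be their equalizer in 𝒞, and define the prolonged operators p^∞f₀ := J(f₀) ∘ Δ_Y and p^∞g₀ := J(g₀) ∘ Δ_Y : J Y → J Z. Let e : K → J Y be the equalizer of p^∞f₀ and p^∞g₀ in 𝒞, and let (K₀)^∞ → J Y be the prolongation of e₀, i.e. the pullback of Δ_Y : J Y → J(J Y) along J(e₀) : J K₀ → J(J Y), with its projection to J Y. Then K and (K₀)^∞ are isomorphic as subobjects of J Y: there is an isomorphism K ≅ (K₀)^∞ commuting with the monomorphisms into J Y. -/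
/-!
Since `J` preserves equalizers, `J(e₀)` is an equalizer of `J(f₀)` and `J(g₀)`, and a pullback of
an equalizer of `u, v` along any `h` is an equalizer of `h ≫ u, h ≫ v`; take `h := Δ_Y`.
-/

open CategoryTheory CategoryTheory.Limits

namespace CategoryTheory.Limits

variable {C : Type*} [Category C] {X A B E : C} {u v : A ⟶ B} {ι : E ⟶ A}
  (w : ι ≫ u = ι ≫ v) (hι : IsLimit (Fork.ofι ι w)) (h : X ⟶ A)
  [HasEqualizer (h ≫ u) (h ≫ v)] [HasPullback h ι]

noncomputable def equalizerCompIsoPullback : equalizer (h ≫ u) (h ≫ v) ≅ pullback h ι :=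
  IsLimit.conePointUniqueUpToIso (limit.isLimit _)
    (isLimitPrecompFork h hι (IsPullback.of_hasPullback h ι).flip.isLimit)

theorem equalizerCompIsoPullback_hom_fst :
    (equalizerCompIsoPullback w hι h).hom ≫ pullback.fst h ι = equalizer.ι (h ≫ u) (h ≫ v) :=
  IsLimit.conePointUniqueUpToIso_hom_comp _ _ WalkingParallelPair.zero

end CategoryTheory.Limits

theorem statement14_general {C : Type*} [Category C] [HasEqualizers C] [HasPullbacks C]
    (G : Comonad C)
    [PreservesLimitsOfShape WalkingParallelPair G.toFunctor]
    {Y Z : C} (f₀ g₀ : G.obj Y ⟶ Z) :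
    ∃ φ : equalizer (G.δ.app Y ≫ G.map f₀) (G.δ.app Y ≫ G.map g₀)
        ≅ pullback (G.δ.app Y) (G.map (equalizer.ι f₀ g₀)),
      φ.hom ≫ pullback.fst (G.δ.app Y) (G.map (equalizer.ι f₀ g₀))
        = equalizer.ι (G.δ.app Y ≫ G.map f₀) (G.δ.app Y ≫ G.map g₀) := by
  have hmap := isLimitForkMapOfIsLimit G.toFunctor _ (equalizerIsEqualizer f₀ g₀)
  exact ⟨_, equalizerCompIsoPullback_hom_fst _ hmap (G.δ.app Y)⟩

/-- Let `(J, ε, Δ)` be a comonad on a category with equalizers and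
pullbacks, preserved by `J`. For `f₀, g₀ : J Y ⟶ Z` with equalizer `e₀ : K₀ ⟶ J Y`, and
prolonged operators `p^∞f₀ := J(f₀) ∘ Δ_Y`, `p^∞g₀ := J(g₀) ∘ Δ_Y : J Y ⟶ J Z`, the
equalizer `K ⟶ J Y` of `p^∞f₀` and `p^∞g₀` coincides, as a subobject of `J Y`, with the
prolongation `(K₀)^∞` of `e₀`, i.e. the pullback of `Δ_Y` along `J(e₀)`. -/
theorem statement14 {C : Type*} [Category C] [HasEqualizers C] [HasPullbacks C]
    (G : Comonad C)
    [PreservesLimitsOfShape WalkingParallelPair G.toFunctor]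
    [PreservesLimitsOfShape WalkingCospan G.toFunctor]
    {Y Z : C} (f₀ g₀ : G.obj Y ⟶ Z) :
    ∃ φ : equalizer (G.δ.app Y ≫ G.map f₀) (G.δ.app Y ≫ G.map g₀)
        ≅ pullback (G.δ.app Y) (G.map (equalizer.ι f₀ g₀)),
      φ.hom ≫ pullback.fst (G.δ.app Y) (G.map (equalizer.ι f₀ g₀))
        = equalizer.ι (G.δ.app Y ≫ G.map f₀) (G.δ.app Y ≫ G.map g₀) :=
  statement14_general G f₀ g₀
end

section
/- Let (J, ε, Δ) be a comonad on a finitely complete category 𝒞 whose underlying functor preserves finite limits. In particular the unique morphism u : J ⊤ → ⊤ from the value of J at the terminal object is an isomorphism, so ⊤ carries the coalgebra structure u⁻¹ : ⊤ → J ⊤. Let e : ℰ → J Y be a monomorphism and ρ : ℰ → J ℰ a morphism with J(e) ∘ ρ = Δ_Y ∘ e such that this square is a pullback (a formally integrable generalized PDE), so that (ℰ, ρ) is a J-coalgebra. For σ : ⊤ → Y define its jet prolongation j^∞σ := J(σ) ∘ u⁻¹ : ⊤ → J Y. Then coalgebra morphisms from (⊤, u⁻¹) to (ℰ, ρ) are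 in natural bijection with the solutions of the PDE, i.e. with morphisms σ : ⊤ → Y such that j^∞σ factors through e : ℰ → J Y; the bijection sends a coalgebra morphism s : ⊤ → ℰ to σ := ε_Y ∘ e ∘ s, and then e ∘ s is the factorization of j^∞σ through e. -/
open CategoryTheory CategoryTheory.Limits

/-- Let `(J, ε, Δ)` be a comonad on a finitely complete category whose
functor preserves finite limits, so that the unique morphism `u : J ⊤ ⟶ ⊤` (the terminal
comparison) is an isomorphism and `⊤` carries the coalgebra structure `u⁻¹`. Let
`e : ℰ ⟶ J Y` with `ρ : ℰ ⟶ J ℰ` be a formally integrable generalized PDE (the square of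
`e, ρ` against `Δ_Y, J(e)` is a pullback). Writing `j^∞σ := J(σ) ∘ u⁻¹` for `σ : ⊤ ⟶ Y`,
coalgebra morphisms `s : (⊤, u⁻¹) ⟶ (ℰ, ρ)` are in bijection with solutions, i.e. with
`σ : ⊤ ⟶ Y` such that `j^∞σ` factors through `e`; the bijection sends `s` to
`σ := ε_Y ∘ e ∘ s`, with `e ∘ s` the factorization of `j^∞σ` through `e`. -/
theorem statement16 {C : Type*} [Category C] [HasFiniteLimits C]
    (G : Comonad C) [PreservesFiniteLimits G.toFunctor]
    {ℰ Y : C} (e : ℰ ⟶ G.obj Y) [Mono e] (ρ : ℰ ⟶ G.obj ℰ)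
    (hpb : IsPullback e ρ (G.δ.app Y) (G.map e)) :
    -- a coalgebra morphism `s` yields the solution `σ := ε_Y ∘ e ∘ s`, whose jet
    -- prolongation `j^∞σ` factors through `e` via `e ∘ s`:
    (∀ s : ⊤_ C ⟶ ℰ,
      inv (terminalComparison G.toFunctor) ≫ G.map s = s ≫ ρ →
      inv (terminalComparison G.toFunctor) ≫ G.map (s ≫ e ≫ G.ε.app Y) = s ≫ e) ∧
    -- the assignment `s ↦ σ` is injective on coalgebra morphisms:
    (∀ s₁ s₂ : ⊤_ C ⟶ ℰ,
      inv (terminalComparison G.toFunctor) ≫ G.map s₁ = s₁ ≫ ρ →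
      inv (terminalComparison G.toFunctor) ≫ G.map s₂ = s₂ ≫ ρ →
      s₁ ≫ e ≫ G.ε.app Y = s₂ ≫ e ≫ G.ε.app Y → s₁ = s₂) ∧
    -- and surjective onto the solutions of the PDE:
    (∀ σ : ⊤_ C ⟶ Y,
      (∃ t : ⊤_ C ⟶ ℰ, t ≫ e = inv (terminalComparison G.toFunctor) ≫ G.map σ) →
      ∃ s : ⊤_ C ⟶ ℰ,
        (inv (terminalComparison G.toFunctor) ≫ G.map s = s ≫ ρ) ∧
        s ≫ e ≫ G.ε.app Y = σ) := by
  set i := inv (terminalComparison G.toFunctor) with hi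
  have key : ∀ s : ⊤_ C ⟶ ℰ, i ≫ G.map s = s ≫ ρ →
      i ≫ G.map (s ≫ e ≫ G.ε.app Y) = s ≫ e := by
    intro s hs
    have : i ≫ G.map (s ≫ e ≫ G.ε.app Y)
        = s ≫ ρ ≫ G.map e ≫ G.map (G.ε.app Y) := by
      simp only [Functor.map_comp, ← Category.assoc, hs]
    rw [this, ← hpb.w_assoc, Comonad.right_counit, Category.comp_id]
  refine ⟨key, ?_, ?_⟩
  · intro s₁ s₂ h₁ h₂ hσ
    have := (key s₁ h₁).symm.trans ((by rw [hσ] : i ≫ G.map (s₁ ≫ e ≫ G.ε.app Y) = i ≫ G.map (s₂ ≫ e ≫ G.ε.app Y)).trans (key s₂ h₂))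
    exact (cancel_mono e).mp this
  · intro σ ⟨t, ht⟩
    have hmono : Mono (G.map e) := preserves_mono_of_preservesLimit G.toFunctor e
    refine ⟨t, ?_, ?_⟩
    · rw [← cancel_mono (G.map e)]
      have hnat : G.map σ ≫ G.δ.app Y = G.δ.app (⊤_ C) ≫ G.map (G.map σ) :=
        (G.δ.naturality σ)
      have hsub : i ≫ G.map i = i ≫ G.δ.app (⊤_ C) := by
        rw [← cancel_mono (G.map (terminalComparison G.toFunctor) ≫ terminalComparison G.toFunctor)]
        apply Subsingleton.elim
      calc (i ≫ G.map t) ≫ G.map e = i ≫ G.map (i ≫ G.map σ) := by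
              rw [Category.assoc, ← Functor.map_comp, ht]
        _ = (i ≫ G.map i) ≫ G.map (G.map σ) := by simp
        _ = i ≫ G.δ.app (⊤_ C) ≫ G.map (G.map σ) := by rw [hsub]; simp
        _ = i ≫ G.map σ ≫ G.δ.app Y := by rw [← hnat]
        _ = (t ≫ e) ≫ G.δ.app Y := by rw [ht]; simp
        _ = (t ≫ ρ) ≫ G.map e := by rw [Category.assoc, hpb.w, Category.assoc]
    · rw [← Category.assoc, ht]
      have : G.map σ ≫ G.ε.app Y = G.ε.app (⊤_ C) ≫ σ := G.ε.naturality σ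
      rw [Category.assoc, this, ← Category.assoc]
      have : i ≫ G.ε.app (⊤_ C) = 𝟙 (⊤_ C) := Subsingleton.elim (α := ⊤_ C ⟶ ⊤_ C) _ _
      rw [this, Category.id_comp]
end

section
/- Let 𝒮 = Sh(C, K) be the category of set-valued sheaves on a small site, and let f : X → Y be an epimorphism in 𝒮. Let f^* : Over Y ⥤ Over X be the pullback (base change) functor, and suppose given a right adjoint f_* : Over X ⥤ Over Y with an adjunction f^* ⊣ f_*. Then f^* is comonadic: the comparison functor from Over Y to the Eilenberg–Moore category of coalgebras over the comonad f^* ∘ f_* on Over X is an equivalence of categories, and under this equivalence the adjunction f^* ⊣ f_* is identified with the forgetful–cofree adjunction for that comonad. -/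
/-!
Epimorphisms of sheaves of sets are exactly the locally surjective morphisms, and local
surjectivity is stable under base change because pullbacks of sheaves are computed sectionwise.
Hence `Over.pullback f` is faithful for an epimorphism `f`; since slices of a sheaf topos are
balanced, it reflects isomorphisms. Being also a right adjoint (to `Over.map f`), it preserves
all limits, so Beck's comonadicity theorem applies.
-/

open CategoryTheory CategoryTheory.Limits Opposite

universe w v u

namespace CategoryTheory

variable {C : Type u} [Category.{v} C] {J : GrothendieckTopology C}

lemma Presheaf.isLocallySurjective_of_isPullback {P F G H : Cᵒᵖ ⥤ Type w}
    {fst : P ⟶ H} {snd : P ⟶ F} {h : H ⟶ G} {f : F ⟶ G} (sq : IsPullback fst snd h f)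
    [IsLocallySurjective J f] : IsLocallySurjective J fst where
  imageSieve_mem {U} s := by
    refine J.superset_covering ?_ (imageSieve_mem J f (h.app (op U) s))
    rintro V g ⟨t, ht⟩
    obtain ⟨p, hp, -⟩ := Types.exists_of_isPullback (sq.map ((evaluation _ _).obj (op V)))
      (H.map g.op s) t (by simp [ht, NatTrans.naturality_apply])
    exact ⟨p, hp⟩

instance Sheaf.epi_pullback_fst [HasSheafify J (Type w)] {X Y B : Sheaf J (Type w)}
    (f : X ⟶ Y) [Epi f] (h : B ⟶ Y) : Epi (pullback.fst h f) := by
  have : Presheaf.IsLocallySurjective J ((sheafToPresheaf J _).map f) :=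
    (isLocallySurjective_iff_epi f).2 ‹_›
  rw [← isLocallySurjective_iff_epi, ← isLocallySurjective_sheafToPresheaf_map_iff]
  exact Presheaf.isLocallySurjective_of_isPullback
    ((IsPullback.of_hasPullback h f).map (sheafToPresheaf J _))

lemma Sheaf.reflectsIsomorphisms_over_pullback [HasSheafify J (Type w)]
    {X Y : Sheaf J (Type w)} (f : X ⟶ Y) [Epi f] : (Over.pullback f).ReflectsIsomorphisms :=
  have : (Over.pullback f).Faithful := Over.faithful_pullback f
  have : Balanced (Over Y) := inferInstance
  reflectsIsomorphisms_of_reflectsMonomorphisms_of_reflectsEpimorphisms _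

instance Comonad.preservesLimitOfIsCoreflexivePair_of_isRightAdjoint {D : Type*} [Category.{v} D]
    (F : C ⥤ D) [F.IsRightAdjoint] : Comonad.PreservesLimitOfIsCoreflexivePair F :=
  ⟨fun _ _ _ _ _ => inferInstance⟩

end CategoryTheory

/-- comonadic descent along an epimorphism in a Grothendieck topos.
For an epimorphism `f : X ⟶ Y` in a category of set-valued sheaves on a small site, the
base change functor `f^* = Over.pullback f : Over Y ⥤ Over X` is comonadic with respect to
any adjunction `f^* ⊣ f_*`: the comparison functor to the Eilenberg–Moore category of
coalgebras over the comonad `f^* ∘ f_*` on `Over X` is an equivalence, and under this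
equivalence the adjunction `f^* ⊣ f_*` is identified with the forgetful–cofree adjunction
(`f^*` with the forgetful functor, `f_*` with the cofree functor). -/
theorem statement17 {Cs : Type u} [SmallCategory Cs] (K : GrothendieckTopology Cs)
    {X Y : Sheaf K (Type u)} (f : X ⟶ Y) [Epi f]
    (fstar : Over X ⥤ Over Y) (adj : Over.pullback f ⊣ fstar) :
    (Comonad.comparison adj).IsEquivalence ∧
    Nonempty (Comonad.comparison adj ⋙ adj.toComonad.forget ≅ Over.pullback f) ∧
    Nonempty (fstar ⋙ Comonad.comparison adj ≅ adj.toComonad.cofree) :=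
  have := Sheaf.reflectsIsomorphisms_over_pullback f
  ⟨(Comonad.comonadicOfHasPreservesCoreflexiveEqualizersOfReflectsIsomorphisms adj).eqv,
    ⟨Comonad.comparisonForget adj⟩, ⟨eqToIso (Comonad.left_comparison adj)⟩⟩
end

section
/- Let (S, K_S) be a small site and i : S ⥤ C a fully faithful functor into a small category C. Then there exists a Grothendieck topology K on C together with an equivalence of categories between Sh(S, K_S) and Sh(C, K). Moreover, if the functor C → Sh(S, K_S) sending an object c to the K_S-sheafification of the presheaf d ↦ Hom_C(i(d), c) is fully faithful, then the topology K can be chosen to be subcanonical, i.e. every representable presheaf on C is a K-sheaf. -/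
/-!
Take for `K` the sieves on `c` whose pullback along every `i u ⟶ c` is `J`-covering. Then `i` is
cover-dense and cocontinuous, and, being fully faithful, exhibits `(S, J)` as a dense subsite of
`(C, K)`, so the comparison lemma gives `Sh(S, J) ≌ Sh(C, K)`. Write `L c` for the sheafification
of `i^* (yoneda c)`. The unit of the adjunction `a ∘ i^* ⊣ Ran_i` at `yoneda c` is, on sections
over `c'`, the map `Hom(c', c) → Hom(L c', L c)` induced by `L`; so if `L` is fully faithful,
`yoneda c ≅ Ran_i (L c)`, which is a `K`-sheaf because `i` is cocontinuous.
-/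

open CategoryTheory

universe v u

namespace CategoryTheory

theorem Adjunction.isIso_unit_app_yoneda {C : Type u} [Category.{v} C] {D : Type*} [Category D]
    {F : (Cᵒᵖ ⥤ Type v) ⥤ D} {G : D ⥤ Cᵒᵖ ⥤ Type v} (adj : F ⊣ G)
    (hF : (yoneda ⋙ F).FullyFaithful) (c : C) :
    IsIso (adj.unit.app (yoneda.obj c)) := by
  rw [NatTrans.isIso_iff_isIso_app]
  intro c'
  rw [isIso_iff_bijective]
  have transpose : ⇑((adj.unit.app (yoneda.obj c)).app c') =
      yonedaEquiv ∘ adj.homEquiv _ _ ∘ (yoneda ⋙ F).map := by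
    ext g
    rw [Function.comp_apply, Function.comp_apply, Adjunction.homEquiv_unit, yonedaEquiv_comp]
    have := congr_arg yonedaEquiv (adj.unit.naturality (yoneda.map g))
    rw [Functor.comp_map, yonedaEquiv_comp, yonedaEquiv_comp, Functor.id_map,
      yonedaEquiv_yoneda_map] at this
    exact this
  rw [transpose]
  exact yonedaEquiv.bijective.comp ((adj.homEquiv _ _).bijective.comp (hF.map_bijective _ _))

end CategoryTheory

namespace CategoryTheory.Functor

section

variable {S C : Type*} [Category S] [Category C] (i : S ⥤ C) (J : GrothendieckTopology S)

/-- The finest topology on `C` for which `i` is cocontinuous. -/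
def coinducedTopology : GrothendieckTopology C where
  sieves c T := ∀ (u : S) (f : i.obj u ⟶ c), (T.pullback f).functorPullback i ∈ J u
  top_mem' c u f := by
    rw [Sieve.pullback_top, Sieve.functorPullback_top]
    exact J.top_mem u
  pullback_stable' c c' T g hT u f := by
    rw [← Sieve.pullback_comp]
    exact hT u (f ≫ g)
  transitive' c T hT R hR u f := by
    refine J.transitive (hT u f) _ fun v h hh => ?_
    rw [← Sieve.functorPullback_pullback, ← Sieve.pullback_comp]
    simpa using hR hh v (𝟙 _)

instance : i.IsCoverDense (i.coinducedTopology J) where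
  is_cover c u f := by
    have : ((Sieve.coverByImage i c).pullback f).functorPullback i = ⊤ := by
      ext v h
      exact iff_of_true (Presieve.in_coverByImage i _) trivial
    rw [this]
    exact J.top_mem u

instance : i.IsCocontinuous J (i.coinducedTopology J) where
  cover_lift {u} T hT := by simpa using hT u (𝟙 _)

instance [i.Full] [i.Faithful] : i.IsDenseSubsite J (i.coinducedTopology J) where
  functorPushforward_mem_iff {u} T := by
    refine ⟨fun hT => ?_, fun hT v f => ?_⟩
    · simpa [(Sieve.fullyFaithfulFunctorGaloisCoinsertion i u).u_l_eq T] using hT u (𝟙 _)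
    · obtain ⟨g, rfl⟩ := i.map_surjective f
      refine J.superset_covering (fun w h hh => ?_) (J.pullback_stable g hT)
      exact ⟨w, h ≫ g, 𝟙 _, hh, by simp⟩

end

theorem isSheaf_yoneda_obj_coinducedTopology {S C : Type u} [SmallCategory S] [SmallCategory C]
    (J : GrothendieckTopology S) (i : S ⥤ C)
    (hL : (yoneda ⋙ (whiskeringLeft Sᵒᵖ Cᵒᵖ (Type u)).obj i.op ⋙
      presheafToSheaf J (Type u)).FullyFaithful) (c : C) :
    Presheaf.IsSheaf (i.coinducedTopology J) (yoneda.obj c) := by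
  let adj := (i.op.ranAdjunction (Type u)).comp (sheafificationAdjunction J (Type u))
  have := adj.isIso_unit_app_yoneda hL c
  exact (Presheaf.isSheaf_of_iso_iff (asIso (adj.unit.app (yoneda.obj c)))).2
    (ran_isSheaf_of_isCocontinuous i _ _)

end CategoryTheory.Functor

/-- Given a small site `(S, J)` and a fully faithful functor `i : S ⥤ C`
into a small category `C`, there is a Grothendieck topology `K` on `C` such that
`Sh(S, J) ≃ Sh(C, K)`. Moreover, if the functor `C ⥤ Sh(S, J)` sending `c` to the
`J`-sheafification of the presheaf `d ↦ Hom_C(i d, c)` is fully faithful, then `K` can be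
chosen subcanonical, i.e. so that every representable presheaf on `C` is a `K`-sheaf. -/
theorem statement18 {S C : Type u} [SmallCategory S] [SmallCategory C]
    (J : GrothendieckTopology S) (i : S ⥤ C) (hi_full : i.Full) (hi_faithful : i.Faithful) :
    (∃ K : GrothendieckTopology C, Nonempty (Sheaf J (Type u) ≌ Sheaf K (Type u))) ∧
    ((yoneda ⋙ (Functor.whiskeringLeft Sᵒᵖ Cᵒᵖ (Type u)).obj i.op ⋙ presheafToSheaf J (Type u)).Full →
     (yoneda ⋙ (Functor.whiskeringLeft Sᵒᵖ Cᵒᵖ (Type u)).obj i.op ⋙ presheafToSheaf J (Type u)).Faithful →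
     ∃ K : GrothendieckTopology C,
       Nonempty (Sheaf J (Type u) ≌ Sheaf K (Type u)) ∧
       ∀ c : C, Presheaf.IsSheaf K (yoneda.obj c)) := by
  let e : Sheaf J (Type u) ≌ Sheaf (i.coinducedTopology J) (Type u) :=
    Functor.IsDenseSubsite.sheafEquiv J _ i (Type u)
  exact ⟨⟨_, ⟨e⟩⟩, fun _ _ =>
    ⟨_, ⟨e⟩, Functor.isSheaf_yoneda_obj_coinducedTopology J i (.ofFullyFaithful _)⟩⟩
end
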